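/- arXiv:2011.08643 — 2 statements merged into one kernel-verified Lean document; each statement's English description precedes it below -/
import Mathlib

section
/- Let s, t be coprime integers greater than 1 and let κ = κ_{s,t} be the largest (s,t)-core. If λ is a partition with |λ| = |κ| + st and core_s(λ) = core_t(λ) = κ, then λ is obtained by adding a single rim st-hook to κ; equivalently, β(λ) is obtained from β(κ) by replacing a single element b with b + st. -/
/-- A partition, given as a weakly decreasing finitely-supported sequence of
natural numbers (`parts 0` is the first part). -/
structure Partition' where
  parts : ℕ →₀ ℕ
  antitone : ∀ ⦃i j : ℕ⦄, i ≤ j → parts j ≤ parts i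

namespace Partition'

/-- The size `|λ|` of a partition. -/
def size (l : Partition') : ℕ := l.parts.sum fun _ v => v

/-- The beta-set `β(λ) = { λ_r − r : r ≥ 1 }` (here 0-indexed). -/
def betaSet (l : Partition') : Set ℤ :=
  Set.range fun r : ℕ => (l.parts r : ℤ) - (r + 1)

/-- `RemoveHook h l m` : `m` is obtained from `l` by removing a rim `h`-hook;
in beta-set terms, an element `b` of `β(l)` is replaced by `b − h ∉ β(l)`. -/
def RemoveHook (h : ℕ) (l m : Partition') : Prop :=
  ∃ b : ℤ, b ∈ l.betaSet ∧ b - (h : ℤ) ∉ l.betaSet ∧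
    m.betaSet = insert (b - (h : ℤ)) (l.betaSet \ {b})

/-- `l` is an `s`-core: no rim `s`-hook can be removed. -/
def IsCore (s : ℕ) (l : Partition') : Prop := ∀ m : Partition', ¬ RemoveHook s l m

/-- `c` is the `s`-core of `l`: it is obtained from `l` by repeatedly removing
rim `s`-hooks, and is itself an `s`-core. -/
def HasCore (s : ℕ) (l c : Partition') : Prop :=
  Relation.ReflTransGen (RemoveHook s) l c ∧ IsCore s c

/-- `IsConj l m` : `m` is the conjugate partition of `l`. -/
def IsConj (l m : Partition') : Prop :=
  ∀ r : ℕ, m.parts r = Set.ncard {c : ℕ | r + 1 ≤ l.parts c}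

end Partition'

/-- The region `U_x = { x + as + bt : a, b > 0 }`. -/
def UpSet (s t : ℕ) (x : ℤ) : Set ℤ :=
  {n : ℤ | ∃ a b : ℕ, 0 < a ∧ 0 < b ∧ n = x + (a : ℤ) * s + (b : ℤ) * t}

/-- The region `L_x = { x − as − bt : a, b ≥ 0 }`. -/
def LowSet (s t : ℕ) (x : ℤ) : Set ℤ :=
  {n : ℤ | ∃ a b : ℕ, n = x - (a : ℤ) * s - (b : ℤ) * t}

/-- `x` is a pinch-point for `l` : `L_x ⊆ β(l)` and `β(l) ∩ U_x = ∅`. -/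
def PinchPoint (s t : ℕ) (x : ℤ) (l : Partition') : Prop :=
  LowSet s t x ⊆ l.betaSet ∧ l.betaSet ∩ UpSet s t x = ∅

/-- The generator `w_i` of the affine symmetric group `W_s` in its level-`t`
action on `ℤ` : `n ↦ n + t` if `n ≡ (i−1)t − (s−1)(t−1)/2 (mod s)`,
`n ↦ n − t` if `n ≡ it − (s−1)(t−1)/2 (mod s)`, and `n ↦ n` otherwise. -/
def wgen (s t : ℕ) (i : ℤ) : ℤ → ℤ := fun n =>
  if (s : ℤ) ∣ (n + ((s : ℤ) - 1) * ((t : ℤ) - 1) / 2 - (i - 1) * t) then n + t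
  else if (s : ℤ) ∣ (n + ((s : ℤ) - 1) * ((t : ℤ) - 1) / 2 - i * t) then n - t
  else n

/-- The monoid of maps `ℤ → ℤ` generated by the `wgen s t i`.  Since each
generator is an involution, this is the image of the level-`t` action
of the affine symmetric group `W_s` on `ℤ`. -/
def WMon (s t : ℕ) : Submonoid (Function.End ℤ) :=
  Submonoid.closure {f | ∃ i : ℤ, f = wgen s t i}

/-- `l` is `(s,t)`-minimal: no partition of smaller size has the same
`s`-core and `t`-core. -/
def MinimalPart (s t : ℕ) (l : Partition') : Prop :=
  ∀ (m σ τ : Partition'), Partition'.HasCore s l σ → Partition'.HasCore t l τ →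
    Partition'.HasCore s m σ → Partition'.HasCore t m τ → l.size ≤ m.size

/-!
Write `y = α s + β t` with `0 ≤ α < t` (unique since `s, t` are coprime); then
`y ∈ ℕs + ℕt` iff `β ≥ 0`. With `2X = st − s − t − 1`, the beta-set of `κ` is `X − (ℕs + ℕt)`,
so `x ∈ β(κ)` iff `φ x ≥ 0`, where `φ x` is the `β`-coordinate of `X − x`.
Replacing a bead `x` by `x − t` raises `φ` by exactly `1`, and replacing it by `x − s` leaves
`φ mod s` unchanged. Comparing truncated beta-sets, the chain of `t`-hooks from `λ` to `κ`
(it has `s` steps, as `|λ| − |κ| = st`) gives `∑_{β(λ)} φ − ∑_{β(κ)} φ = −s`, while the chain of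
`s`-hooks gives `∑_{β(λ)} (φ mod s) = ∑_{β(κ)} (φ mod s)`. A bead `d ∈ β(λ) \ β(κ)` has
`φ d ≤ (φ d mod s) − s` and a bead `e ∈ β(κ) \ β(λ)` has `φ e ≥ φ e mod s`, so
`s · |β(λ) \ β(κ)| ≤ s`: exactly one bead moves, and it moves by `st`.
-/

open Finset Filter

namespace Finset

theorem card_sdiff_mul_le_sum_sub_sum {A B : Finset ℤ} {φ : ℤ → ℤ} {s : ℤ} (hs : 0 < s)
    (hA : ∀ x ∈ A \ B, φ x < 0) (hB : ∀ x ∈ B \ A, 0 ≤ φ x)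
    (hmod : ∑ x ∈ A, φ x % s = ∑ x ∈ B, φ x % s) :
    #(A \ B) * s ≤ ∑ x ∈ B, φ x - ∑ x ∈ A, φ x := by
  have hmod' : ∑ x ∈ B \ A, φ x % s = ∑ x ∈ A \ B, φ x % s := by
    rw [← sub_eq_zero, sum_sdiff_sub_sum_sdiff, hmod, sub_self]
  have hlow : ∀ x ∈ A \ B, φ x ≤ φ x % s - s := fun x hx => by
    have hq : φ x / s < 0 := Int.ediv_neg_of_neg_of_pos (hA x hx) hs
    have := Int.emod_add_mul_ediv (φ x) s
    nlinarith
  have hhigh : ∀ x ∈ B \ A, φ x % s ≤ φ x := fun x hx => by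
    have hq : 0 ≤ φ x / s := Int.ediv_nonneg (hB x hx) hs.le
    have := Int.emod_add_mul_ediv (φ x) s
    nlinarith
  calc #(A \ B) * s = ∑ x ∈ B \ A, φ x % s - ∑ x ∈ A \ B, (φ x % s - s) := by
        rw [sum_sub_distrib, hmod', sum_const, nsmul_eq_mul]; ring
    _ ≤ ∑ x ∈ B \ A, φ x - ∑ x ∈ A \ B, φ x := sub_le_sub (sum_le_sum hhigh) (sum_le_sum hlow)
    _ = ∑ x ∈ B, φ x - ∑ x ∈ A, φ x := sum_sdiff_sub_sum_sdiff

theorem exists_eq_insert_erase_of_card_sdiff_eq_one {A B : Finset ℤ} (hcard : #A = #B)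
    (h : #(A \ B) = 1) :
    ∃ d ∉ B, ∃ e ∈ B, A = insert d (B.erase e) ∧ d - e = ∑ x ∈ A, x - ∑ x ∈ B, x := by
  obtain ⟨d, hd⟩ := card_eq_one.mp h
  obtain ⟨e, he⟩ := card_eq_one.mp ((card_sdiff_comm hcard).symm.trans h)
  have hdA : d ∈ A \ B := hd ▸ mem_singleton_self d
  have heB : e ∈ B \ A := he ▸ mem_singleton_self e
  have hA : A = insert d (B.erase e) := by
    ext x
    have hxd := congrArg (x ∈ ·) hd
    have hxe := congrArg (x ∈ ·) he
    simp only [mem_sdiff, mem_singleton, eq_iff_iff] at hxd hxe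
    simp only [mem_insert, mem_erase]
    tauto
  refine ⟨d, (mem_sdiff.mp hdA).2, e, (mem_sdiff.mp heB).1, hA, ?_⟩
  rw [hA, sum_insert (fun h => (mem_sdiff.mp hdA).2 (mem_of_mem_erase h)),
    sum_erase_eq_sub (mem_sdiff.mp heB).1]
  ring

theorem exists_eq_insert_erase_of_sum_emod_eq {A B : Finset ℤ} {φ : ℤ → ℤ} {s m : ℤ}
    (hs : 0 < s) (hcard : #A = #B) (hA : ∀ x ∈ A \ B, φ x < 0) (hB : ∀ x ∈ B \ A, 0 ≤ φ x)
    (hmod : ∑ x ∈ A, φ x % s = ∑ x ∈ B, φ x % s) (hφ : ∑ x ∈ B, φ x - ∑ x ∈ A, φ x ≤ s)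
    (hm : ∑ x ∈ A, x = ∑ x ∈ B, x + m) (hm0 : m ≠ 0) :
    ∃ e ∈ B, e + m ∉ B ∧ A = insert (e + m) (B.erase e) := by
  have hle : #(A \ B) ≤ 1 := by
    have := card_sdiff_mul_le_sum_sub_sum hs hA hB hmod
    have hle : ((#(A \ B) : ℕ) : ℤ) ≤ 1 := le_of_mul_le_mul_right (by linarith) hs
    exact_mod_cast hle
  have hpos : #(A \ B) ≠ 0 := fun h0 => by
    have hAB : A = B := eq_of_subset_of_card_le (sdiff_eq_empty_iff_subset.mp
      (card_eq_zero.mp h0)) hcard.ge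
    exact hm0 (by rw [hAB] at hm; linarith)
  obtain ⟨d, hdB, e, heB, hAde, hde⟩ :=
    exists_eq_insert_erase_of_card_sdiff_eq_one hcard (by omega)
  obtain rfl : d = e + m := by linarith
  exact ⟨e, heB, hdB, hAde⟩

end Finset

section Coordinates

variable {s t : ℕ}

/-- For coprime `s, t`, every `y` is uniquely `sCoord s t y * s + tCoord s t y * t` with
`0 ≤ sCoord s t y < t`; `Nat.gcdA s t` inverts `s` modulo `t`. -/
def sCoord (s t : ℕ) (y : ℤ) : ℤ := y * Nat.gcdA s t % t

def tCoord (s t : ℕ) (y : ℤ) : ℤ := (y - sCoord s t y * s) / t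

theorem sCoord_nonneg (ht : 0 < t) (y : ℤ) : 0 ≤ sCoord s t y :=
  Int.emod_nonneg _ (by positivity)

theorem sCoord_lt (ht : 0 < t) (y : ℤ) : sCoord s t y < t :=
  Int.emod_lt_of_pos _ (by positivity)

theorem sCoord_mul_add_tCoord_mul (hst : Nat.Coprime s t) (y : ℤ) :
    sCoord s t y * s + tCoord s t y * t = y := by
  have hbez : (1 : ℤ) = s * Nat.gcdA s t + t * Nat.gcdB s t := by
    rw [← Nat.gcd_eq_gcd_ab, hst.gcd_eq_one, Nat.cast_one]
  have hdvd : (t : ℤ) ∣ y - sCoord s t y * s := by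
    refine ⟨y * Nat.gcdB s t + y * Nat.gcdA s t / t * s, ?_⟩
    have := Int.emod_add_mul_ediv (y * Nat.gcdA s t) t
    simp only [sCoord]
    linear_combination y * hbez - s * this
  rw [tCoord, Int.ediv_mul_cancel hdvd]
  ring

theorem tCoord_eq (hst : Nat.Coprime s t) (ht : 0 < t) {y α β : ℤ} (hα : 0 ≤ α) (hαt : α < t)
    (h : α * s + β * t = y) : tCoord s t y = β := by
  have hy := sCoord_mul_add_tCoord_mul hst y
  have hdvd : (t : ℤ) ∣ α - sCoord s t y := by
    refine (Nat.isCoprime_iff_coprime.mpr hst.symm).dvd_of_dvd_mul_right ⟨tCoord s t y - β, ?_⟩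
    linear_combination h - hy
  have hα' : α = sCoord s t y := by
    have := sCoord_nonneg (s := s) ht y
    have := sCoord_lt (s := s) ht y
    have := Int.eq_zero_of_abs_lt_dvd hdvd (abs_sub_lt_iff.mpr ⟨by linarith, by linarith⟩)
    linarith
  have : (tCoord s t y - β) * t = 0 := by linear_combination hy - h + s * hα'
  have ht' : (t : ℤ) ≠ 0 := by positivity
  linarith [(mul_eq_zero.mp this).resolve_right ht']

theorem tCoord_add_t (hst : Nat.Coprime s t) (ht : 0 < t) (y : ℤ) :
    tCoord s t (y + t) = tCoord s t y + 1 :=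
  tCoord_eq hst ht (sCoord_nonneg ht y) (sCoord_lt ht y)
    (by linear_combination sCoord_mul_add_tCoord_mul hst y)

theorem tCoord_add_s_emod (hst : Nat.Coprime s t) (ht : 0 < t) (y : ℤ) :
    tCoord s t (y + s) % s = tCoord s t y % s := by
  have hy := sCoord_mul_add_tCoord_mul hst y
  have h0 := sCoord_nonneg (s := s) ht y
  rcases (Int.add_one_le_iff.mpr (sCoord_lt (s := s) ht y)).lt_or_eq with hlt | heq
  · rw [tCoord_eq (α := sCoord s t y + 1) (β := tCoord s t y) hst ht (by linarith) hlt
      (by linear_combination hy)]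
  · rw [tCoord_eq (α := 0) (β := tCoord s t y + s) hst ht le_rfl (by positivity)
      (by linear_combination hy - s * heq), Int.add_emod_right]

theorem exists_two_mul_eq_of_coprime (hst : Nat.Coprime s t) :
    ∃ X : ℤ, 2 * X = s * t - s - t - 1 := by
  rcases Nat.even_or_odd s with hs | ⟨m, rfl⟩
  · obtain ⟨n, rfl⟩ := (Nat.Coprime.coprime_dvd_left hs.two_dvd hst).odd_of_left
    exact ⟨s * n - n - 1, by push_cast; ring⟩
  · exact ⟨m * t - m - 1, by push_cast; ring⟩

/-- `(−t − 1 + s(t − 1 − 2j))/2 = X − js`, so the left side says `X − x = js + kt`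
with `0 ≤ j < t`. -/
theorem exists_add_mul_eq_iff_tCoord_nonneg (hst : Nat.Coprime s t) (ht : 0 < t) {X : ℤ}
    (hX : 2 * X = s * t - s - t - 1) (x : ℤ) :
    (∃ j k : ℕ, j < t ∧ 2 * (x + (t : ℤ) * k) = -(t : ℤ) - 1 + (s : ℤ) * ((t : ℤ) - 1 - 2 * j)) ↔
      0 ≤ tCoord s t (X - x) := by
  constructor
  · rintro ⟨j, k, hjt, hjk⟩
    rw [tCoord_eq (β := k) hst ht (Int.natCast_nonneg j) (by exact_mod_cast hjt)
      (mul_left_cancel₀ two_ne_zero (by linear_combination hjk - hX))]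
    positivity
  · intro h
    refine ⟨(sCoord s t (X - x)).toNat, (tCoord s t (X - x)).toNat, by
      have := sCoord_lt (s := s) ht (X - x); omega, ?_⟩
    rw [Int.toNat_of_nonneg (sCoord_nonneg ht _), Int.toNat_of_nonneg h]
    linear_combination hX + 2 * sCoord_mul_add_tCoord_mul hst (X - x)

end Coordinates

namespace Partition'

def betaNum (l : Partition') (r : ℕ) : ℤ := (l.parts r : ℤ) - (r + 1)

theorem betaNum_strictAnti (l : Partition') : StrictAnti l.betaNum := fun i j hij => by
  have : l.parts j ≤ l.parts i := l.antitone hij.le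
  simp only [betaNum]
  omega

theorem eventually_parts_eq_zero (l : Partition') :
    ∀ᶠ N in atTop, ∀ r, N ≤ r → l.parts r = 0 := by
  refine eventually_atTop.mpr ⟨l.parts.support.sup id + 1, fun N hN r hr => ?_⟩
  by_contra h
  have := le_sup (f := id) (Finsupp.mem_support_iff.mpr h)
  simp only [id] at this
  omega

def betaFinset (l : Partition') (N : ℕ) : Finset ℤ := (range N).image l.betaNum

variable {l m : Partition'} {N : ℕ}

theorem card_betaFinset : #(l.betaFinset N) = N := by
  rw [betaFinset, card_image_of_injective _ l.betaNum_strictAnti.injective, card_range]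

theorem neg_le_of_mem_betaFinset {x : ℤ} (hx : x ∈ l.betaFinset N) : -(N : ℤ) ≤ x := by
  obtain ⟨r, hr, rfl⟩ := mem_image.mp hx
  have := mem_range.mp hr
  simp only [betaNum]
  omega

theorem mem_betaSet_of_mem_betaFinset {x : ℤ} (hx : x ∈ l.betaFinset N) : x ∈ l.betaSet := by
  obtain ⟨r, -, rfl⟩ := mem_image.mp hx
  exact ⟨r, rfl⟩

theorem mem_betaFinset_iff (hN : ∀ r, N ≤ r → l.parts r = 0) {x : ℤ} :
    x ∈ l.betaFinset N ↔ -(N : ℤ) ≤ x ∧ x ∈ l.betaSet := by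
  refine ⟨fun hx => ⟨neg_le_of_mem_betaFinset hx, mem_betaSet_of_mem_betaFinset hx⟩,
    fun ⟨hxN, r, hr⟩ => mem_image.mpr ⟨r, mem_range.mpr ?_, hr⟩⟩
  by_contra! hNr
  simp only [hN r hNr] at hr
  omega

theorem notMem_betaSet_of_mem_sdiff (hNm : ∀ r, N ≤ r → m.parts r = 0) {x : ℤ}
    (hx : x ∈ l.betaFinset N \ m.betaFinset N) : x ∉ m.betaSet := fun hxm =>
  (mem_sdiff.mp hx).2 ((mem_betaFinset_iff hNm).mpr
    ⟨neg_le_of_mem_betaFinset (mem_sdiff.mp hx).1, hxm⟩)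

theorem mem_betaSet_of_lt (hN : ∀ r, N ≤ r → l.parts r = 0) {x : ℤ} (hx : x < -N) :
    x ∈ l.betaSet :=
  ⟨(-x - 1).toNat, by
    have hr : l.parts (-x - 1).toNat = 0 := hN _ (by omega)
    simp only [hr]
    omega⟩

theorem sum_betaFinset (hN : ∀ r, N ≤ r → l.parts r = 0) :
    ∑ x ∈ l.betaFinset N, x = l.size - ∑ r ∈ range N, ((r : ℤ) + 1) := by
  have hsupp : l.parts.support ⊆ range N := fun r hr => by
    by_contra h
    exact Finsupp.mem_support_iff.mp hr (hN r (by simpa using h))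
  have hsize : l.size = ∑ r ∈ range N, l.parts r :=
    Finsupp.sum_of_support_subset _ hsupp _ (fun _ _ => rfl)
  rw [betaFinset, sum_image fun i _ j _ h => l.betaNum_strictAnti.injective h, hsize]
  push_cast
  simp only [betaNum, sum_sub_distrib]

theorem RemoveHook.eventually_betaFinset_eq {h : ℕ} (hlm : RemoveHook h l m) :
    ∃ b, ∀ᶠ N in atTop, b ∈ l.betaFinset N ∧ b - h ∉ l.betaFinset N ∧
      m.betaFinset N = insert (b - h) ((l.betaFinset N).erase b) := by
  obtain ⟨b, hb, hbh, hm⟩ := hlm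
  refine ⟨b, (l.eventually_parts_eq_zero.and m.eventually_parts_eq_zero).mono
    fun N ⟨hNl, hNm⟩ => ?_⟩
  have hbhN : -(N : ℤ) ≤ b - h := by
    by_contra! hlt
    exact hbh (mem_betaSet_of_lt hNl hlt)
  refine ⟨(mem_betaFinset_iff hNl).mpr ⟨by omega, hb⟩,
    fun hmem => hbh ((mem_betaFinset_iff hNl).mp hmem).2, ?_⟩
  ext x
  rw [mem_betaFinset_iff hNm, hm, mem_insert, mem_erase, mem_betaFinset_iff hNl]
  simp only [Set.mem_insert_iff, Set.mem_sdiff, Set.mem_singleton_iff]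
  constructor
  · rintro ⟨hx, rfl | ⟨hxl, hxb⟩⟩
    exacts [Or.inl rfl, Or.inr ⟨hxb, hx, hxl⟩]
  · rintro (rfl | ⟨hxb, hx, hxl⟩)
    exacts [⟨hbhN, Or.inl rfl⟩, ⟨hx, Or.inr ⟨hxl, hxb⟩⟩]

theorem exists_sum_betaFinset_eq_of_reflTransGen {h : ℕ} {p q : Partition'}
    (hpq : Relation.ReflTransGen (RemoveHook h) p q) :
    ∃ n : ℕ, ∀ᶠ N in atTop, ∀ (f : ℤ → ℤ) (c : ℤ), (∀ x, f x - f (x - h) = c) →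
      ∑ x ∈ p.betaFinset N, f x = ∑ x ∈ q.betaFinset N, f x + n * c := by
  induction hpq using Relation.ReflTransGen.head_induction_on with
  | refl => exact ⟨0, Eventually.of_forall fun N f c _ => by simp⟩
  | head hstep _ ih =>
    obtain ⟨n, hn⟩ := ih
    obtain ⟨b, hb⟩ := hstep.eventually_betaFinset_eq
    refine ⟨n + 1, (hb.and hn).mono fun N ⟨⟨hbN, hbhN, hmid⟩, hnN⟩ f c hf => ?_⟩
    have hsum := hnN f c hf
    rw [hmid, sum_insert (fun h => hbhN (mem_of_mem_erase h)), sum_erase_eq_sub hbN] at hsum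
    push_cast
    linear_combination hsum + hf b

theorem betaSet_eq_insert_sdiff (hNl : ∀ r, N ≤ r → l.parts r = 0)
    (hNm : ∀ r, N ≤ r → m.parts r = 0) {d e : ℤ} (he : e ∈ m.betaFinset N)
    (h : l.betaFinset N = insert d ((m.betaFinset N).erase e)) :
    l.betaSet = insert d (m.betaSet \ {e}) := by
  have heN := neg_le_of_mem_betaFinset he
  have hdN : -(N : ℤ) ≤ d := neg_le_of_mem_betaFinset (h ▸ mem_insert_self d _)
  ext x
  by_cases hx : x < -N
  · simp only [mem_betaSet_of_lt hNl hx, Set.mem_insert_iff, Set.mem_sdiff,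
      mem_betaSet_of_lt hNm hx, Set.mem_singleton_iff, true_iff, true_and]
    omega
  · have hl := mem_betaFinset_iff hNl (x := x)
    have hm := mem_betaFinset_iff hNm (x := x)
    rw [h, mem_insert, mem_erase] at hl
    simp only [Set.mem_insert_iff, Set.mem_sdiff, Set.mem_singleton_iff]
    constructor
    · intro hxl
      rcases hl.mpr ⟨by omega, hxl⟩ with hxd | ⟨hxe, hxm⟩
      exacts [Or.inl hxd, Or.inr ⟨(hm.mp hxm).2, hxe⟩]
    · rintro (rfl | ⟨hxm, hxe⟩)
      exacts [(hl.mp (Or.inl rfl)).2, (hl.mp (Or.inr ⟨hxe, hm.mpr ⟨by omega, hxm⟩⟩)).2]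

end Partition'

open Partition' in
/-- a partition of `|κ_{s,t}| + st` with `s`-core and `t`-core both
equal to `κ_{s,t}` is obtained from `κ_{s,t}` by adding a single rim `st`-hook. -/
theorem stmt7 (s t : ℕ) (hs : 1 < s) (ht : 1 < t) (hst : Nat.Coprime s t)
    (κ l : Partition')
    (hκ : κ.betaSet = {x : ℤ | ∃ j k : ℕ, j < t ∧
      2 * (x + (t : ℤ) * k) = -(t : ℤ) - 1 + (s : ℤ) * ((t : ℤ) - 1 - 2 * j)})
    (hsize : l.size = κ.size + s * t)
    (hcs : Partition'.HasCore s l κ) (hct : Partition'.HasCore t l κ) :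
    ∃ b ∈ κ.betaSet, b + (s : ℤ) * t ∉ κ.betaSet ∧
      l.betaSet = insert (b + (s : ℤ) * t) (κ.betaSet \ {b}) := by
  have ht0 : 0 < t := by omega
  obtain ⟨X, hX⟩ := exists_two_mul_eq_of_coprime hst
  have hκX (x : ℤ) : x ∈ κ.betaSet ↔ 0 ≤ tCoord s t (X - x) := by
    rw [hκ]; exact exists_add_mul_eq_iff_tCoord_nonneg hst ht0 hX x
  obtain ⟨_, hsChain⟩ := exists_sum_betaFinset_eq_of_reflTransGen hcs.1
  obtain ⟨n, htChain⟩ := exists_sum_betaFinset_eq_of_reflTransGen hct.1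
  obtain ⟨N, hNl, hNκ, hsN, htN⟩ := (l.eventually_parts_eq_zero.and
    (κ.eventually_parts_eq_zero.and (hsChain.and htChain))).exists
  have hsum : ∑ x ∈ l.betaFinset N, x = ∑ x ∈ κ.betaFinset N, x + s * t := by
    rw [sum_betaFinset hNl, sum_betaFinset hNκ, hsize]
    push_cast
    ring
  have hn : (n : ℤ) = s := mul_right_cancel₀ (by positivity : (t : ℤ) ≠ 0)
    (by linarith [htN (fun x => x) t fun x => by ring])
  have hφ := htN (fun x => tCoord s t (X - x)) (-1) fun x => by
    rw [show X - (x - t) = X - x + t by ring, tCoord_add_t hst ht0]; ring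
  have hmod := hsN (fun x => tCoord s t (X - x) % s) 0 fun x => by
    rw [show X - (x - s) = X - x + s by ring, tCoord_add_s_emod hst ht0, sub_self]
  obtain ⟨e, heκ, hdκ, hl⟩ := exists_eq_insert_erase_of_sum_emod_eq (s := s) (by positivity)
    (card_betaFinset.trans card_betaFinset.symm)
    (fun x hx => not_le.mp ((hκX x).not.mp (notMem_betaSet_of_mem_sdiff hNκ hx)))
    (fun x hx => (hκX x).mp (mem_betaSet_of_mem_betaFinset (mem_sdiff.mp hx).1))
    (by simpa using hmod) (by linarith) hsum (by positivity)
  exact ⟨e, mem_betaSet_of_mem_betaFinset heκ,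
    notMem_betaSet_of_mem_sdiff hNκ (mem_sdiff.mpr ⟨hl ▸ mem_insert_self _ _, hdκ⟩),
    betaSet_eq_insert_sdiff hNl hNκ heκ hl⟩
end

section
/- Let s, t be coprime integers greater than 1 and x ∈ ℤ, and let m, n be s×t (0,1)-matrices with the same number of 1 entries, corresponding via the pinch-point bijection θ_x to partitions θ_x(m), θ_x(n) with pinch-point x. Then θ_x(m) and θ_x(n) have the same s-core if and only if m and n have the same row sums, and the same t-core if and only if m and n have the same column sums. -/
/-!
Place the beta-set on James's `s`-abacus, whose runner `d` carries the positions `d + k * s`.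
Removing a rim `s`-hook slides one bead one level down a single runner, so the charge of every
runner (beads at levels `≥ 0` minus gaps at levels `< 0`) is invariant; the runners of an `s`-core
are pushed all the way down, so the core is determined by these charges. As `gcd(s, t) = 1`, the
runners through `x - st + (i + 1)t`, `i < s`, meet every residue class mod `s`, and on the `i`-th
of them `θ_x(m)` has `L_x` at the levels `≤ 0` and the `1`'s of row `i` at the levels `j + 1`:
its charge is one more than the `i`-th row sum. Columns follow by exchanging `s` and `t`.
-/

open Set

namespace Abacus

/-- Meaningful only for `S` bounded above with `Sᶜ` bounded below; otherwise `ncard` is junk `0`.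
-/
noncomputable def charge (S : Set ℤ) : ℤ := (S ∩ Ici 0).ncard - (Sᶜ ∩ Iio 0).ncard

section charge

variable {S : Set ℤ}

theorem finite_inter_Ici (hS : BddAbove S) (n : ℤ) : (S ∩ Ici n).Finite :=
  (bddBelow_Ici.mono inter_subset_right).finite_of_bddAbove (hS.mono inter_subset_left)

theorem finite_compl_inter_Iio (hS : BddBelow Sᶜ) (n : ℤ) : (Sᶜ ∩ Iio n).Finite :=
  (hS.mono inter_subset_left).finite_of_bddAbove (bddAbove_Iio.mono inter_subset_right)

theorem charge_eq (hS : BddAbove S) (hS' : BddBelow Sᶜ) (n : ℤ) :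
    charge S = (S ∩ Ici n).ncard + n - (Sᶜ ∩ Iio n).ncard := by
  have step : ∀ n : ℤ, (S ∩ Ici n).ncard + n - (Sᶜ ∩ Iio n).ncard
      = (S ∩ Ici (n + 1)).ncard + (n + 1) - (Sᶜ ∩ Iio (n + 1)).ncard := by
    intro n
    have hIci : Ici n = insert n (Ici (n + 1)) := by ext; simp; omega
    have hIio : Iio (n + 1) = insert n (Iio n) := by ext; simp
    rw [hIci, hIio]
    by_cases hn : n ∈ S
    · rw [inter_insert_of_mem hn, inter_insert_of_notMem (not_not_intro hn),
        ncard_insert_of_notMem (by simp) (finite_inter_Ici hS _)]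
      push_cast; ring
    · rw [inter_insert_of_notMem hn, inter_insert_of_mem hn,
        ncard_insert_of_notMem (by simp) (finite_compl_inter_Iio hS' _)]
      push_cast; ring
  induction n using Int.induction_on with
  | zero => simp [charge]
  | succ n ih => rw [ih, step]
  | pred n ih => rw [ih, step (-(n : ℤ) - 1), sub_add_cancel]

theorem bddAbove_insert_diff (hS : BddAbove S) (a b : ℤ) : BddAbove (insert a (S \ {b})) :=
  (hS.insert a).mono (insert_subset_insert sdiff_subset)

theorem bddBelow_compl_insert_diff (hS' : BddBelow Sᶜ) (a b : ℤ) :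
    BddBelow (insert a (S \ {b}))ᶜ :=
  (hS'.insert b).mono fun z hz => by
    by_cases hzb : z = b
    · exact Or.inl hzb
    · exact Or.inr fun hzS => hz (Or.inr ⟨hzS, hzb⟩)

theorem charge_exchange (hS : BddAbove S) (hS' : BddBelow Sᶜ) {a b : ℤ} (ha : a ∉ S)
    (hb : b ∈ S) : charge (insert a (S \ {b})) = charge S := by
  rw [charge_eq (bddAbove_insert_diff hS a b) (bddBelow_compl_insert_diff hS' a b) (min a b),
    charge_eq hS hS' (min a b)]
  have e₁ : insert a (S \ {b}) ∩ Ici (min a b) = insert a ((S ∩ Ici (min a b)) \ {b}) := by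
    rw [insert_inter_of_mem (mem_Ici.mpr (min_le_left a b)), sdiff_inter_right_comm]
  have e₂ : (insert a (S \ {b}))ᶜ ∩ Iio (min a b) = Sᶜ ∩ Iio (min a b) := by
    ext z; simp only [mem_inter_iff, mem_compl_iff, mem_insert_iff, mem_sdiff,
      mem_singleton_iff, mem_Iio, lt_min_iff]
    constructor
    · rintro ⟨hz, h⟩; exact ⟨fun hzS => hz (Or.inr ⟨hzS, h.2.ne⟩), h⟩
    · rintro ⟨hz, h⟩; exact ⟨by rintro (rfl | ⟨hzS, -⟩); exacts [h.1.false, hz hzS], h⟩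
  have hb' : b ∈ S ∩ Ici (min a b) := ⟨hb, mem_Ici.mpr (min_le_right a b)⟩
  rw [e₁, e₂, ncard_exchange (fun h => ha h.1) hb']

theorem _root_.IsLowerSet.mem_iff_lt_charge (hS : BddAbove S) (hS' : BddBelow Sᶜ)
    (hlow : IsLowerSet S) (k : ℤ) : k ∈ S ↔ k < charge S := by
  rw [charge_eq hS hS' k]
  by_cases hk : k ∈ S
  · have hgaps : Sᶜ ∩ Iio k = ∅ :=
      eq_empty_of_forall_notMem fun z ⟨hz, hzk⟩ => hz (hlow (le_of_lt hzk) hk)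
    have hbeads : 0 < (S ∩ Ici k).ncard :=
      (ncard_pos (finite_inter_Ici hS k)).mpr ⟨k, hk, mem_Ici.mpr le_rfl⟩
    simp only [hk, hgaps, ncard_empty, true_iff]
    omega
  · have hbeads : S ∩ Ici k = ∅ :=
      eq_empty_of_forall_notMem fun z ⟨hz, hkz⟩ => hk (hlow hkz hz)
    simp only [hk, hbeads, ncard_empty, false_iff, not_lt]
    omega

theorem charge_Iic_zero_union {T : Set ℤ} (hT : T.Finite) (hT₀ : T ⊆ Ioi 0) :
    charge (Iic 0 ∪ T) = T.ncard + 1 := by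
  have hbdd : BddAbove (Iic 0 ∪ T) := bddAbove_Iic.union hT.bddAbove
  have hbdd' : BddBelow (Iic 0 ∪ T)ᶜ := bddBelow_Ioi.mono fun z hz =>
    lt_of_not_ge fun h => hz (Or.inl h)
  have e₁ : (Iic 0 ∪ T) ∩ Ici 1 = T := by
    ext z; simp only [mem_inter_iff, mem_union, mem_Iic, mem_Ici]
    constructor
    · rintro ⟨h | h, h1⟩; exacts [absurd h (by omega), h]
    · intro h; exact ⟨Or.inr h, hT₀ h⟩
  have e₂ : (Iic 0 ∪ T)ᶜ ∩ Iio 1 = ∅ :=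
    eq_empty_of_forall_notMem fun z ⟨hz, (h : z < 1)⟩ => hz (Or.inl (mem_Iic.mpr (by omega)))
  rw [charge_eq hbdd hbdd' 1, e₁, e₂, ncard_empty]
  push_cast; ring

end charge

def runner (s : ℕ) (d : ℤ) (B : Set ℤ) : Set ℤ := {k | d + k * s ∈ B}

section runner

variable {s : ℕ} {B : Set ℤ}

theorem bddAbove_runner (hs : 0 < s) (hB : BddAbove B) (d : ℤ) : BddAbove (runner s d B) := by
  obtain ⟨M, hM⟩ := hB
  refine ⟨|M - d|, fun k (hk : d + k * s ∈ B) => ?_⟩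
  have h := hM hk
  have hs' : (1 : ℤ) ≤ s := by exact_mod_cast hs
  rcases le_or_gt k 0 with hk0 | hk0
  · exact hk0.trans (abs_nonneg _)
  · exact (le_abs_self _).trans' (by nlinarith)

theorem bddBelow_compl_runner (hs : 0 < s) (hB : BddBelow Bᶜ) (d : ℤ) :
    BddBelow (runner s d B)ᶜ := by
  obtain ⟨L, hL⟩ := hB
  refine ⟨-|L - d|, fun k (hk : d + k * s ∉ B) => ?_⟩
  have h := hL hk
  have hs' : (1 : ℤ) ≤ s := by exact_mod_cast hs
  rcases le_or_gt 0 k with hk0 | hk0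
  · exact (neg_nonpos.mpr (abs_nonneg _)).trans hk0
  · exact (neg_abs_le _).trans (by nlinarith)

theorem runner_insert_diff (hs : 0 < s) (d a b : ℤ) :
    runner s d (insert (d + a * s) (B \ {d + b * s})) = insert a (runner s d B \ {b}) := by
  have hinj : ∀ u v : ℤ, d + u * s = d + v * s ↔ u = v := fun u v =>
    ⟨fun h => mul_right_cancel₀ (show (s : ℤ) ≠ 0 by exact_mod_cast hs.ne') (by linarith),
      fun h => h ▸ rfl⟩
  ext k
  simp only [runner, mem_ofPred_eq, mem_insert_iff, mem_sdiff, mem_singleton_iff, hinj]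

theorem runner_insert_diff_of_not_dvd {d a b : ℤ} (ha : ¬(s : ℤ) ∣ a - d)
    (hb : ¬(s : ℤ) ∣ b - d) : runner s d (insert a (B \ {b})) = runner s d B := by
  ext k
  have hne : ∀ {c : ℤ}, ¬(s : ℤ) ∣ c - d → d + k * s ≠ c := fun hc h =>
    hc ⟨k, by rw [← h]; ring⟩
  simp only [runner, mem_ofPred_eq, mem_insert_iff, mem_sdiff, mem_singleton_iff, hne ha, hne hb,
    false_or, not_false_eq_true, and_true]

end runner

noncomputable def weight (N : ℤ) (B : Set ℤ) : ℤ := ∑ᶠ b ∈ B ∩ Ioi N, (b - N)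

theorem weight_nonneg (N : ℤ) (B : Set ℤ) : 0 ≤ weight N B :=
  finsum_nonneg fun _ => finsum_nonneg fun hb => sub_nonneg.mpr (le_of_lt hb.2)

theorem weight_exchange {N : ℤ} {B : Set ℤ} (hB : BddAbove B) {a b : ℤ} (ha : a ∉ B)
    (hb : b ∈ B) (hNa : N < a) (hNb : N < b) :
    weight N (insert a (B \ {b})) = weight N B + a - b := by
  set Y := (B ∩ Ioi N) \ {b}
  have hY : Y.Finite :=
    (finite_inter_Ici hB N).subset fun z hz => ⟨hz.1.1, mem_Ici.mpr (le_of_lt hz.1.2)⟩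
  have e₁ : insert a (B \ {b}) ∩ Ioi N = insert a Y := by
    rw [insert_inter_of_mem (mem_Ioi.mpr hNa), sdiff_inter_right_comm]
  have e₂ : B ∩ Ioi N = insert b Y := by
    rw [insert_sdiff_singleton, insert_eq_of_mem (show b ∈ B ∩ Ioi N from ⟨hb, hNb⟩)]
  rw [weight, weight, e₁, e₂, finsum_mem_insert _ (fun h => ha h.1.1) hY,
    finsum_mem_insert _ (fun h => h.2 rfl) hY]
  ring

end Abacus

open Abacus

theorem StrictAnti.ncard_range_inter_Ici {f : ℕ → ℤ} (hf : StrictAnti f) (r : ℕ) :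
    (range f ∩ Ici (f r)).ncard = r + 1 := by
  have : range f ∩ Ici (f r) = f '' Iic r := by
    ext z
    constructor
    · rintro ⟨⟨k, rfl⟩, hk⟩; exact ⟨k, hf.le_iff_ge.mp hk, rfl⟩
    · rintro ⟨k, hk, rfl⟩; exact ⟨⟨k, rfl⟩, hf.antitone hk⟩
  rw [this, ncard_image_of_injective _ hf.injective, ncard_Iic_nat]

theorem exists_strictAnti_range_eq {B : Set ℤ} (hB : BddAbove B) (hB' : BddBelow Bᶜ) :
    ∃ e : ℕ → ℤ, StrictAnti e ∧ range e = B := by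
  obtain ⟨M, hM⟩ := hB
  obtain ⟨L, hL⟩ := hB'
  set p : ℕ → Prop := fun k => M - k ∈ B
  have hp : (Set.ofPred p).Infinite := infinite_of_forall_exists_gt fun a =>
    ⟨a + (M - L).toNat + 1, by_contra fun h => by have := hL h; omega, by omega⟩
  refine ⟨fun r => M - Nat.nth p r,
    fun i j hij => by have := Nat.nth_strictMono hp hij; dsimp only; omega,
    Subset.antisymm (range_subset_iff.mpr (Nat.nth_mem_of_infinite hp)) fun z hz => ?_⟩
  obtain ⟨r, hr⟩ : (M - z).toNat ∈ range (Nat.nth p) := by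
    rw [Nat.range_nth_of_infinite hp]
    show M - ((M - z).toNat : ℕ) ∈ B
    rwa [Int.toNat_of_nonneg (by linarith [hM hz]), sub_sub_cancel]
  exact ⟨r, by simp only [hr]; have := hM hz; omega⟩

namespace Partition'

def beta (l : Partition') (r : ℕ) : ℤ := (l.parts r : ℤ) - (r + 1)

theorem betaSet_eq_range_beta (l : Partition') : l.betaSet = range l.beta := rfl

theorem strictAnti_beta (l : Partition') : StrictAnti l.beta := fun i j hij => by
  have := l.antitone hij.le
  simp only [beta]
  omega

theorem betaSet_injective : Function.Injective betaSet := by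
  rintro ⟨parts, h⟩ ⟨parts', h'⟩ hβ
  have hbeta := Set.range_injOn_strictMono (β := ℕ) (γ := ℤᵒᵈ)
    (strictAnti_beta ⟨parts, h⟩) (strictAnti_beta ⟨parts', h'⟩) hβ
  congr
  ext r
  have := congrFun hbeta r
  simp only [beta] at this
  omega

theorem exists_parts_eq_zero (l : Partition') : ∃ R, ∀ r, R ≤ r → l.parts r = 0 := by
  obtain ⟨R, hR⟩ := l.parts.support.exists_nat_subset_range
  exact ⟨R, fun r hr => Finsupp.notMem_support_iff.mp fun h =>
    (Finset.mem_range.mp (hR h)).not_ge hr⟩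

theorem Iic_subset_betaSet {l : Partition'} {R : ℕ} (hR : ∀ r, R ≤ r → l.parts r = 0) :
    Iic (-(R : ℤ) - 1) ⊆ l.betaSet := fun z (hz : z ≤ _) => by
  refine ⟨(-z - 1).toNat, show (l.parts _ : ℤ) - _ = z from ?_⟩
  rw [hR _ (by omega)]
  omega

theorem bddAbove_betaSet (l : Partition') : BddAbove l.betaSet := by
  refine ⟨l.parts 0 - 1, ?_⟩
  rintro _ ⟨r, rfl⟩
  have := l.antitone r.zero_le
  show (l.parts r : ℤ) - (r + 1) ≤ _
  omega

theorem bddBelow_compl_betaSet (l : Partition') : BddBelow l.betaSetᶜ := by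
  obtain ⟨R, hR⟩ := l.exists_parts_eq_zero
  exact ⟨-(R : ℤ), fun z hz => le_of_not_gt fun h => hz (Iic_subset_betaSet hR (by
    simp only [mem_Iic]; omega))⟩

theorem charge_betaSet (l : Partition') : charge l.betaSet = 0 := by
  obtain ⟨R, hR⟩ := l.exists_parts_eq_zero
  have hbeta : l.beta R = -(R : ℤ) - 1 := by simp only [beta, hR R le_rfl]; push_cast; ring
  have hgaps : l.betaSetᶜ ∩ Iio (l.beta R) = ∅ :=
    eq_empty_of_forall_notMem fun z ⟨hz, h⟩ => hz (Iic_subset_betaSet hR (by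
      simp only [mem_Iio, hbeta] at h; simp only [mem_Iic]; omega))
  rw [charge_eq l.bddAbove_betaSet l.bddBelow_compl_betaSet (l.beta R), hgaps,
    betaSet_eq_range_beta, l.strictAnti_beta.ncard_range_inter_Ici, hbeta]
  simp

/-- The `r`-th part is the number of gaps below the `r`-th largest bead. -/
theorem exists_betaSet_eq {B : Set ℤ} (hB : BddAbove B) (hB' : BddBelow Bᶜ)
    (h₀ : charge B = 0) : ∃ l : Partition', l.betaSet = B := by
  obtain ⟨e, he, hrange⟩ := exists_strictAnti_range_eq hB hB'
  obtain ⟨L, hL⟩ := hB'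
  set f : ℕ → ℕ := fun r => (Bᶜ ∩ Iio (e r)).ncard
  have hfe : ∀ r, (f r : ℤ) - (r + 1) = e r := fun r => by
    have hbeads : (B ∩ Ici (e r)).ncard = r + 1 := hrange ▸ he.ncard_range_inter_Ici r
    have := charge_eq hB ⟨L, hL⟩ (e r)
    rw [h₀, hbeads] at this
    simp only [f]
    push_cast at this
    omega
  have hsupp : (Function.support f).Finite :=
    ((finite_inter_Ici hB L).preimage he.injective.injOn).subset fun r hr => by
      obtain ⟨z, hz, hzr⟩ := nonempty_of_ncard_ne_zero hr
      exact ⟨hrange ▸ mem_range_self r, (hL hz).trans (le_of_lt hzr)⟩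
  refine ⟨⟨Finsupp.ofSupportFinite f hsupp, fun i j hij => ?_⟩, ?_⟩
  · simp only [Finsupp.ofSupportFinite_coe, f]
    exact ncard_le_ncard (inter_subset_inter_right _ (Iio_subset_Iio (he.antitone hij)))
      (finite_compl_inter_Iio ⟨L, hL⟩ _)
  · refine Eq.trans ?_ hrange
    exact congrArg range (funext fun r => by rw [Finsupp.ofSupportFinite_coe]; exact hfe r)

variable {s : ℕ} {l m c : Partition'}

theorem exists_removeHook {h : ℕ} {b : ℤ} (hb : b ∈ l.betaSet) (hbh : b - h ∉ l.betaSet) :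
    ∃ m, RemoveHook h l m := by
  obtain ⟨m, hm⟩ := exists_betaSet_eq (bddAbove_insert_diff l.bddAbove_betaSet _ _)
    (bddBelow_compl_insert_diff l.bddBelow_compl_betaSet _ _)
    (by rw [charge_exchange l.bddAbove_betaSet l.bddBelow_compl_betaSet hbh hb, charge_betaSet])
  exact ⟨m, b, hb, hbh, hm⟩

theorem RemoveHook.charge_runner (hs : 0 < s) (h : RemoveHook s l m) (d : ℤ) :
    charge (runner s d m.betaSet) = charge (runner s d l.betaSet) := by
  obtain ⟨b, hb, hbs, hm⟩ := h
  rw [hm]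
  by_cases hd : (s : ℤ) ∣ b - d
  · obtain ⟨k, hk⟩ := hd
    obtain rfl : b = d + k * s := by linear_combination hk
    rw [show d + k * s - s = d + (k - 1) * s by ring] at hbs ⊢
    rw [runner_insert_diff hs]
    exact charge_exchange (bddAbove_runner hs l.bddAbove_betaSet d)
      (bddBelow_compl_runner hs l.bddBelow_compl_betaSet d) hbs hb
  · refine congrArg charge (runner_insert_diff_of_not_dvd (fun h => hd ?_) hd)
    simpa [sub_right_comm] using dvd_add h (dvd_refl (s : ℤ))

theorem charge_runner_of_reflTransGen (hs : 0 < s)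
    (h : Relation.ReflTransGen (RemoveHook s) l c) (d : ℤ) :
    charge (runner s d c.betaSet) = charge (runner s d l.betaSet) := by
  induction h with
  | refl => rfl
  | tail _ hm ih => rw [hm.charge_runner hs, ih]

theorem IsCore.sub_mem_betaSet (hc : IsCore s c) {b : ℤ} (hb : b ∈ c.betaSet) :
    b - s ∈ c.betaSet := by
  by_contra h
  obtain ⟨m, hm⟩ := exists_removeHook hb h
  exact hc m hm

theorem IsCore.isLowerSet_runner (hc : IsCore s c) (d : ℤ) :
    IsLowerSet (runner s d c.betaSet) := by
  intro k j hjk hk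
  induction j, hjk using Int.leInductionDown with
  | base => exact hk
  | pred j _ ih =>
    have := hc.sub_mem_betaSet ih
    rwa [show d + j * s - s = d + (j - 1) * s by ring] at this

theorem IsCore.mem_betaSet_iff (hs : 0 < s) (hc : IsCore s c) (d k : ℤ) :
    d + k * s ∈ c.betaSet ↔ k < charge (runner s d c.betaSet) :=
  (hc.isLowerSet_runner d).mem_iff_lt_charge (bddAbove_runner hs c.bddAbove_betaSet d)
    (bddBelow_compl_runner hs c.bddBelow_compl_betaSet d) k

/-- Each hook removal lowers `weight N` by `s`. -/
theorem exists_hasCore (hs : 0 < s) (l : Partition') : ∃ c, HasCore s l c := by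
  obtain ⟨R, hR⟩ := l.exists_parts_eq_zero
  set N : ℤ := -(R : ℤ) - 1
  suffices ∀ w : ℕ, ∀ l : Partition', Iic N ⊆ l.betaSet → (weight N l.betaSet).toNat = w →
      ∃ c, HasCore s l c from this _ l (Iic_subset_betaSet hR) rfl
  intro w
  induction w using Nat.strong_induction_on with
  | _ w ih =>
  intro l hN hw
  by_cases hcore : IsCore s l
  · exact ⟨l, .refl, hcore⟩
  obtain ⟨m, b, hb, hbs, hm⟩ := not_forall_not.mp hcore
  have hNbs : N < b - s := lt_of_not_ge fun h => hbs (hN h)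
  have hweight : weight N m.betaSet = weight N l.betaSet - s := by
    rw [hm, weight_exchange l.bddAbove_betaSet hbs hb hNbs (by omega)]
    ring
  have hNm : Iic N ⊆ m.betaSet := fun z hz => by
    rw [hm]
    exact Or.inr ⟨hN hz, by rintro rfl; simp only [mem_Iic] at hz; omega⟩
  obtain ⟨c, hmc, hc⟩ := ih _ (by have := weight_nonneg N m.betaSet; omega) m hNm rfl
  exact ⟨c, .head ⟨b, hb, hbs, hm⟩ hmc, hc⟩

end Partition'

open Partition'

/-- The beta-set of `θ_x(m)`. -/
def pinchBetaSet (s t : ℕ) (x : ℤ) (m : Fin s → Fin t → Bool) : Set ℤ :=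
  LowSet s t x ∪ {b : ℤ | ∃ (i : Fin s) (j : Fin t), m i j = true ∧
    b = x - (s : ℤ) * t + ((i : ℕ) + 1) * t + ((j : ℕ) + 1) * s}

theorem pinchBetaSet_transpose (s t : ℕ) (x : ℤ) (m : Fin s → Fin t → Bool) :
    pinchBetaSet t s x (fun j i => m i j) = pinchBetaSet s t x m := by
  ext z
  simp only [pinchBetaSet, LowSet, mem_union, mem_ofPred_eq]
  refine or_congr
    ⟨fun ⟨a, b, h⟩ => ⟨b, a, by rw [h]; ring⟩, fun ⟨a, b, h⟩ => ⟨b, a, by rw [h]; ring⟩⟩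
    ⟨fun ⟨j, i, hm, h⟩ => ⟨i, j, hm, by rw [h]; ring⟩,
      fun ⟨i, j, hm, h⟩ => ⟨j, i, hm, by rw [h]; ring⟩⟩

theorem runner_pinchBetaSet {s t : ℕ} (hs : 0 < s) (ht : 0 < t) (hst : s.Coprime t) (x : ℤ)
    (m : Fin s → Fin t → Bool) (i : Fin s) :
    runner s (x - s * t + ((i : ℕ) + 1) * t) (pinchBetaSet s t x m)
      = Iic 0 ∪ (fun j : Fin t => ((j : ℕ) : ℤ) + 1) '' {j | m i j = true} := by
  have hcop : IsCoprime (s : ℤ) t := Nat.isCoprime_iff_coprime.mpr hst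
  have hs' : (0 : ℤ) < s := by exact_mod_cast hs
  have ht' : (0 : ℤ) < t := by exact_mod_cast ht
  have hi := i.isLt
  ext k
  simp only [runner, pinchBetaSet, LowSet, mem_union, mem_ofPred_eq, mem_Iic, mem_image]
  constructor
  · rintro (⟨a, b, h⟩ | ⟨i', j, hm, h⟩)
    · left
      by_contra hk
      have hdvd : (s : ℤ) ∣ ((i : ℕ) + 1 + b) * t := ⟨t - k - a, by linear_combination h⟩
      have hle := Int.le_of_dvd (by positivity) (hcop.dvd_of_dvd_mul_right hdvd)
      nlinarith
    · right
      have hi' := i'.isLt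
      have hdvd : (s : ℤ) ∣ (((i : ℕ) : ℤ) - (i' : ℕ)) * t :=
        ⟨j + 1 - k, by linear_combination h⟩
      have hii := Int.eq_zero_of_abs_lt_dvd (hcop.dvd_of_dvd_mul_right hdvd)
        (by rw [abs_lt]; omega)
      obtain rfl : i' = i := Fin.ext (by omega)
      exact ⟨j, hm, mul_right_cancel₀ hs'.ne' (by linear_combination -h)⟩
  · rintro (hk | ⟨j, hm, rfl⟩)
    · refine Or.inl ⟨(-k).toNat, s - 1 - i, ?_⟩
      rw [Int.toNat_of_nonneg (by omega), Nat.cast_sub (by omega), Nat.cast_sub (by omega)]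
      push_cast
      ring
    · exact Or.inr ⟨i, j, hm, by ring⟩

theorem charge_runner_pinchBetaSet {s t : ℕ} (hs : 0 < s) (ht : 0 < t) (hst : s.Coprime t)
    (x : ℤ) (m : Fin s → Fin t → Bool) (i : Fin s) :
    charge (runner s (x - s * t + ((i : ℕ) + 1) * t) (pinchBetaSet s t x m))
      = (Finset.univ.filter fun j : Fin t => m i j = true).card + 1 := by
  rw [runner_pinchBetaSet hs ht hst, charge_Iic_zero_union (toFinite _)
    (by rintro _ ⟨j, -, rfl⟩; simp only [mem_Ioi]; omega),
    ncard_image_of_injective _ fun a b h => Fin.ext (by simpa using h)]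
  simp [ncard_eq_toFinset_card']

theorem exists_fin_eq_add_mul {s t : ℕ} (hs : 0 < s) (hst : s.Coprime t) (x b : ℤ) :
    ∃ (i : Fin s) (k : ℤ), b = x - s * t + ((i : ℕ) + 1) * t + k * s := by
  obtain ⟨u, v, huv⟩ := Nat.isCoprime_iff_coprime.mpr hst
  have hs' : (0 : ℤ) < s := by exact_mod_cast hs
  set r := (v * (b - x) - 1) % s
  have hr₀ : 0 ≤ r := Int.emod_nonneg _ hs'.ne'
  have hr : r = v * (b - x) - 1 - s * ((v * (b - x) - 1) / s) := Int.emod_def _ _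
  refine ⟨⟨r.toNat, by have := Int.emod_lt_of_pos (v * (b - x) - 1) hs'; omega⟩,
    (b - x) * u + t * ((v * (b - x) - 1) / s) + t, ?_⟩
  simp only [Int.toNat_of_nonneg hr₀]
  linear_combination (-(t : ℤ)) * hr - (b - x) * huv

theorem exists_common_core_iff {s t : ℕ} (hs : 0 < s) (ht : 0 < t) (hst : s.Coprime t) (x : ℤ)
    {m n : Fin s → Fin t → Bool} {l p : Partition'}
    (hl : l.betaSet = pinchBetaSet s t x m) (hp : p.betaSet = pinchBetaSet s t x n) :
    (∃ c : Partition', Partition'.HasCore s l c ∧ Partition'.HasCore s p c) ↔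
      ∀ i : Fin s, (Finset.univ.filter fun j : Fin t => m i j = true).card =
        (Finset.univ.filter fun j : Fin t => n i j = true).card := by
  have hrow : ∀ {q : Partition'} {a : Fin s → Fin t → Bool}, q.betaSet = pinchBetaSet s t x a →
      ∀ i : Fin s, charge (runner s (x - s * t + ((i : ℕ) + 1) * t) q.betaSet)
        = (Finset.univ.filter fun j : Fin t => a i j = true).card + 1 := fun hq i => by
    rw [hq, charge_runner_pinchBetaSet hs ht hst]
  constructor
  · rintro ⟨c, hlc, hpc⟩ i
    have h := hrow hl i
    rw [← charge_runner_of_reflTransGen hs hlc.1, charge_runner_of_reflTransGen hs hpc.1,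
      hrow hp i] at h
    exact_mod_cast (add_right_cancel h).symm
  · intro hmn
    obtain ⟨c, hc⟩ := exists_hasCore hs l
    obtain ⟨c', hc'⟩ := exists_hasCore hs p
    suffices c' = c from ⟨c, hc, this ▸ hc'⟩
    refine betaSet_injective (Set.ext fun b => ?_)
    obtain ⟨i, k, rfl⟩ := exists_fin_eq_add_mul hs hst x b
    rw [hc.2.mem_betaSet_iff hs, hc'.2.mem_betaSet_iff hs, charge_runner_of_reflTransGen hs hc.1,
      charge_runner_of_reflTransGen hs hc'.1, hrow hl, hrow hp, hmn]

theorem stmt12_general (s t : ℕ) (hs : 1 < s) (ht : 1 < t) (hst : Nat.Coprime s t) (x : ℤ)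
    (m n : Fin s → Fin t → Bool)
    (l p : Partition')
    (hl : l.betaSet = LowSet s t x ∪
      {b : ℤ | ∃ (i : Fin s) (j : Fin t), m i j = true ∧
        b = x - (s : ℤ) * t + ((i : ℕ) + 1) * t + ((j : ℕ) + 1) * s})
    (hp : p.betaSet = LowSet s t x ∪
      {b : ℤ | ∃ (i : Fin s) (j : Fin t), n i j = true ∧
        b = x - (s : ℤ) * t + ((i : ℕ) + 1) * t + ((j : ℕ) + 1) * s}) :
    ((∃ c : Partition', Partition'.HasCore s l c ∧ Partition'.HasCore s p c) ↔
      ∀ i : Fin s, (Finset.univ.filter fun j : Fin t => m i j = true).card =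
        (Finset.univ.filter fun j : Fin t => n i j = true).card) ∧
    ((∃ c : Partition', Partition'.HasCore t l c ∧ Partition'.HasCore t p c) ↔
      ∀ j : Fin t, (Finset.univ.filter fun i : Fin s => m i j = true).card =
        (Finset.univ.filter fun i : Fin s => n i j = true).card) := by
  have hs₀ : 0 < s := by omega
  have ht₀ : 0 < t := by omega
  change l.betaSet = pinchBetaSet s t x m at hl
  change p.betaSet = pinchBetaSet s t x n at hp
  refine ⟨exists_common_core_iff hs₀ ht₀ hst x hl hp, ?_⟩
  rw [← pinchBetaSet_transpose] at hl hp
  exact exists_common_core_iff ht₀ hs₀ hst.symm x hl hp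

/-- under the pinch-point bijection `θ_x`, matrices give partitions
with the same `s`-core iff they have the same row sums, and the same `t`-core iff
they have the same column sums. -/
theorem stmt12 (s t : ℕ) (hs : 1 < s) (ht : 1 < t) (hst : Nat.Coprime s t) (x : ℤ)
    (m n : Fin s → Fin t → Bool)
    (hmA : 2 * (((Finset.univ.filter fun p : Fin s × Fin t => m p.1 p.2 = true).card : ℤ))
      = (s : ℤ) * t - s - t - 1 - 2 * x)
    (hnA : 2 * (((Finset.univ.filter fun p : Fin s × Fin t => n p.1 p.2 = true).card : ℤ))
      = (s : ℤ) * t - s - t - 1 - 2 * x)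
    (l p : Partition')
    (hl : l.betaSet = LowSet s t x ∪
      {b : ℤ | ∃ (i : Fin s) (j : Fin t), m i j = true ∧
        b = x - (s : ℤ) * t + ((i : ℕ) + 1) * t + ((j : ℕ) + 1) * s})
    (hp : p.betaSet = LowSet s t x ∪
      {b : ℤ | ∃ (i : Fin s) (j : Fin t), n i j = true ∧
        b = x - (s : ℤ) * t + ((i : ℕ) + 1) * t + ((j : ℕ) + 1) * s}) :
    ((∃ c : Partition', Partition'.HasCore s l c ∧ Partition'.HasCore s p c) ↔
      ∀ i : Fin s, (Finset.univ.filter fun j : Fin t => m i j = true).card =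
        (Finset.univ.filter fun j : Fin t => n i j = true).card) ∧
    ((∃ c : Partition', Partition'.HasCore t l c ∧ Partition'.HasCore t p c) ↔
      ∀ j : Fin t, (Finset.univ.filter fun i : Fin s => m i j = true).card =
        (Finset.univ.filter fun i : Fin s => n i j = true).card) :=
  stmt12_general s t hs ht hst x m n l p hl hp
end
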